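/- Let E be a 2n-dimensional F_2-vector space with nondegenerate hyperbolic quadratic form. Fix a maximal isotropic subspace F_0 and define ε(F) = (−1)^{dim(F ∩ F_0)} for maximal isotropic subspaces F. Then for every isotropic subspace F' of E that is not maximal, the sum of ε(F) over all maximal isotropic subspaces F containing F' is zero. -/

import Mathlib

open Module

/-- The hyperbolic quadratic form on `F₂^n ⊕ F₂^n`. -/
def hypq (n : ℕ) (x : (Fin n ⊕ Fin n) → ZMod 2) : ZMod 2 :=
  ∑ j : Fin n, x (Sum.inl j) * x (Sum.inr j)

def IsIsotropic (n : ℕ) (F : Submodule (ZMod 2) ((Fin n ⊕ Fin n) → ZMod 2)) : Prop :=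
  ∀ x ∈ F, hypq n x = 0

def IsMaxIsotropic (n : ℕ) (F : Submodule (ZMod 2) ((Fin n ⊕ Fin n) → ZMod 2)) : Prop :=
  IsIsotropic n F ∧ ∀ F', IsIsotropic n F' → F ≤ F' → F' = F

/-!
Since `F'` is not maximal, its orthogonal contains a vector `v` with `q v = 1` (otherwise `F'ᗮ`
would be totally singular, hence `F'ᗮ ⊆ F'`). The reflection `τ y = y + b(v, y) v` is an isometric
involution fixing `F'` pointwise, so it permutes the maximal isotropic subspaces containing `F'`.
These are all Lagrangians (`F = Fᗮ`), because the hyperbolic space contains one. For Lagrangians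
`F` and `F₀`, the intersections `F ⊓ F₀` and `τ F ⊓ F₀` have dimensions of opposite parity, so `τ`
pairs off the terms of the sum with opposite signs.
-/

open QuadraticMap

lemma zmod_two_eq_zero_or_eq_one (a : ZMod 2) : a = 0 ∨ a = 1 := by
  revert a; decide

namespace LinearMap.BilinForm

variable {K V : Type*} [Field K] [AddCommGroup V] [Module K V] {B : LinearMap.BilinForm K V}

lemma orthogonal_sup (A C : Submodule K V) :
    B.orthogonal (A ⊔ C) = B.orthogonal A ⊓ B.orthogonal C := by
  refine le_antisymm (le_inf (orthogonal_le le_sup_left) (orthogonal_le le_sup_right)) ?_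
  rintro x ⟨hxA, hxC⟩ _ hy
  obtain ⟨a, ha, c, hc, rfl⟩ := Submodule.mem_sup.1 hy
  rw [map_add, LinearMap.add_apply, hxA a ha, hxC c hc, add_zero]

lemma mem_orthogonal_span_singleton_iff {x y : V} : y ∈ B.orthogonal (K ∙ x) ↔ B x y = 0 := by
  refine ⟨fun h => h x (Submodule.mem_span_singleton_self x), fun h _ hz => ?_⟩
  obtain ⟨c, rfl⟩ := Submodule.mem_span_singleton.1 hz
  rw [map_smul, LinearMap.smul_apply, h, smul_zero]

variable [FiniteDimensional K V]

lemma finrank_add_finrank_orthogonal_of_nondegenerate (hB : B.Nondegenerate)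
    (W : Submodule K V) : finrank K W + finrank K (B.orthogonal W) = finrank K V := by
  have := finrank_add_finrank_orthogonal' (B := B) W
  rwa [hB.ker_eq_bot, inf_bot_eq, finrank_bot, add_zero] at this

lemma finrank_inf_add_finrank_eq (hB : B.Nondegenerate) (A C : Submodule K V) :
    finrank K ↥(A ⊓ C) + finrank K V =
      finrank K A + finrank K C + finrank K ↥(B.orthogonal A ⊓ B.orthogonal C) := by
  rw [← orthogonal_sup, ← finrank_add_finrank_orthogonal_of_nondegenerate hB (A ⊔ C),
    ← Submodule.finrank_sup_add_finrank_inf_eq A C]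
  ring

end LinearMap.BilinForm

namespace QuadraticMap

section CommRing

variable {R V : Type*} [CommRing R] [AddCommGroup V] [Module R V] {Q : QuadraticForm R V}

local notation:max W "ᗮ" => LinearMap.BilinForm.orthogonal (polarBilin Q) W

variable (Q) in
def IsTotallySingular (W : Submodule R V) : Prop := ∀ x ∈ W, Q x = 0

lemma isRefl_polarBilin : (polarBilin Q).IsRefl := fun x y h => by
  rwa [polarBilin_apply_apply, polar_comm, ← polarBilin_apply_apply]

namespace IsTotallySingular

variable {A C W : Submodule R V}

lemma mono (hC : Q.IsTotallySingular C) (hAC : A ≤ C) : Q.IsTotallySingular A :=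
  fun x hx => hC x (hAC hx)

lemma le_orthogonal (hW : Q.IsTotallySingular W) : W ≤ Wᗮ :=
  fun x hx y hy => by
    rw [polarBilin_apply_apply, polar, hW _ (W.add_mem hy hx), hW y hy, hW x hx, sub_zero,
      sub_zero]

lemma sup (hA : Q.IsTotallySingular A) (hC : Q.IsTotallySingular C) (hAC : C ≤ Aᗮ) :
    Q.IsTotallySingular (A ⊔ C) := by
  intro x hx
  obtain ⟨a, ha, c, hc, rfl⟩ := Submodule.mem_sup.1 hx
  rw [QuadraticMap.map_add (⇑Q), hA a ha, hC c hc, ← polarBilin_apply_apply, hAC hc a ha,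
    add_zero, add_zero]

end IsTotallySingular

variable (Q) in
noncomputable def reflection (v : V) : V →ₗ[R] V :=
  Module.preReflection v (polarBilin Q v)

variable {v : V}

lemma reflection_apply (y : V) : Q.reflection v y = y - polar Q v y • v :=
  Module.preReflection_apply _ _ _

lemma reflection_eq_self {y : V} (hy : polar Q v y = 0) : Q.reflection v y = y := by
  rw [reflection_apply, hy, zero_smul, sub_zero]

variable (hv : Q v = 1)
include hv

lemma reflection_involutive : Function.Involutive (Q.reflection v) :=
  Module.involutive_preReflection (by
    rw [polarBilin_apply_apply, polar_self, hv, nsmul_one, Nat.cast_ofNat])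

lemma map_reflection (y : V) : Q (Q.reflection v y) = Q y := by
  rw [reflection_apply, sub_eq_add_neg, QuadraticMap.map_add (⇑Q), QuadraticMap.map_neg,
    QuadraticMap.map_smul, hv, polar_neg_right, polar_smul_right, polar_comm Q v y, smul_eq_mul]
  ring

lemma map_map_reflection (W : Submodule R V) :
    (W.map (Q.reflection v)).map (Q.reflection v) = W := by
  have h : Q.reflection v ∘ₗ Q.reflection v = LinearMap.id :=
    LinearMap.ext (reflection_involutive hv)
  rw [← Submodule.map_comp, h, Submodule.map_id]

variable {A W : Submodule R V}

lemma IsTotallySingular.map_reflection (hW : Q.IsTotallySingular W) :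
    Q.IsTotallySingular (W.map (Q.reflection v)) := by
  rintro _ ⟨y, hy, rfl⟩
  rw [QuadraticMap.map_reflection hv, hW y hy]

lemma maximal_map_reflection (hW : Maximal Q.IsTotallySingular W) :
    Maximal Q.IsTotallySingular (W.map (Q.reflection v)) := by
  refine ⟨hW.prop.map_reflection hv, fun U hU hWU => ?_⟩
  have hWU' : W ≤ U.map (Q.reflection v) := by
    simpa only [map_map_reflection hv] using Submodule.map_mono (f := Q.reflection v) hWU
  simpa only [map_map_reflection hv] using
    Submodule.map_mono (f := Q.reflection v) (hW.2 (hU.map_reflection hv) hWU')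

omit hv in
lemma le_map_reflection (hvA : v ∈ Aᗮ) (hAW : A ≤ W) : A ≤ W.map (Q.reflection v) :=
  fun y hy => ⟨y, hAW hy, reflection_eq_self (by rw [polar_comm]; exact hvA y hy)⟩

end CommRing

section ZMod

variable {V : Type*} [AddCommGroup V] [Module (ZMod 2) V] {Q : QuadraticForm (ZMod 2) V}

local notation:max W "ᗮ" => LinearMap.BilinForm.orthogonal (polarBilin Q) W

section Reflection

variable {F : Submodule (ZMod 2) V} (hF : Q.IsTotallySingular F) {v : V} (hv : Q v = 1)
include hF hv

lemma notMem_of_isTotallySingular : v ∉ F := fun h => by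
  rw [hF v h] at hv
  exact zero_ne_one hv

/-- Over `ZMod 2`, `y + v` with `y ∈ F` is singular iff `polar Q v y = 1`, i.e. iff it is the
reflection of `y`. -/
lemma mem_or_mem_map_reflection {x : V} (hx : x ∈ F ⊔ ZMod 2 ∙ v) (hx0 : Q x = 0) :
    x ∈ F ∨ x ∈ F.map (Q.reflection v) := by
  obtain ⟨y, hy, _, hz, rfl⟩ := Submodule.mem_sup.1 hx
  obtain ⟨c, rfl⟩ := Submodule.mem_span_singleton.1 hz
  rcases zmod_two_eq_zero_or_eq_one c with rfl | rfl
  · left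
    simpa using hy
  · right
    have hpolar : polar Q v y = 1 := by
      rw [one_smul, QuadraticMap.map_add (⇑Q), hF y hy, hv, zero_add, add_eq_zero_iff_neg_eq,
        ZMod.neg_eq_self_mod_two, polar_comm] at hx0
      exact hx0.symm
    refine ⟨y, hy, ?_⟩
    rw [reflection_apply, hpolar, sub_eq_add_neg, ← neg_smul, ZMod.neg_eq_self_mod_two]

lemma inf_map_reflection :
    F ⊓ F.map (Q.reflection v) = F ⊓ (ZMod 2 ∙ v)ᗮ := by
  ext x
  simp only [Submodule.mem_inf, LinearMap.BilinForm.mem_orthogonal_span_singleton_iff,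
    polarBilin_apply_apply]
  constructor
  · rintro ⟨hxF, y, hyF, rfl⟩
    rcases zmod_two_eq_zero_or_eq_one (polar Q v y) with h | h
    · rw [reflection_eq_self h]
      exact ⟨hyF, h⟩
    · refine absurd ?_ (notMem_of_isTotallySingular hF hv)
      have := F.sub_mem hyF hxF
      rwa [reflection_apply, h, one_smul, sub_sub_cancel] at this
  · rintro ⟨hxF, hx⟩
    exact ⟨hxF, x, hxF, reflection_eq_self hx⟩

end Reflection

variable [FiniteDimensional (ZMod 2) V] (hQ : (polarBilin Q).Nondegenerate)
include hQ

lemma exists_mem_orthogonal_eq_one {W : Submodule (ZMod 2) V} (hW : Q.IsTotallySingular W)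
    (hmax : ¬ Maximal Q.IsTotallySingular W) : ∃ v ∈ Wᗮ, Q v = 1 := by
  by_contra! h
  have hWperp : Q.IsTotallySingular Wᗮ := fun x hx =>
    (zmod_two_eq_zero_or_eq_one _).resolve_right (h x hx)
  have hperp_le : Wᗮ ≤ W := by
    simpa only [LinearMap.BilinForm.orthogonal_orthogonal hQ isRefl_polarBilin] using
      hWperp.le_orthogonal
  exact hmax ⟨hW, fun U hU hWU =>
    hU.le_orthogonal.trans ((LinearMap.BilinForm.orthogonal_le hWU).trans hperp_le)⟩

lemma orthogonal_eq_of_maximal {L W : Submodule (ZMod 2) V} (hL : Q.IsTotallySingular L)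
    (hLL : Lᗮ = L) (hW : Maximal Q.IsTotallySingular W) : Wᗮ = W := by
  have hLW : L ⊓ Wᗮ ≤ W := le_sup_right.trans <|
    hW.2 (hW.prop.sup (hL.mono inf_le_left) inf_le_right) le_sup_left
  have hperp_le : Wᗮ ≤ L ⊔ W := by
    rw [← LinearMap.BilinForm.orthogonal_orthogonal hQ isRefl_polarBilin (L ⊔ W),
      LinearMap.BilinForm.orthogonal_sup, hLL]
    exact LinearMap.BilinForm.orthogonal_le hLW
  refine le_antisymm ?_ hW.prop.le_orthogonal
  calc Wᗮ = (W ⊔ L) ⊓ Wᗮ := by rw [sup_comm, inf_eq_right.2 hperp_le]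
    _ = W ⊔ L ⊓ Wᗮ := sup_inf_assoc_of_le L hW.prop.le_orthogonal
    _ ≤ W := sup_le le_rfl hLW

/-- With `τ` the reflection in `v`, the intersections `F ⊓ G` and `τ F ⊓ G` meet in
`(F ⊔ ⟨v⟩)ᗮ ⊓ G` and span `(F ⊔ ⟨v⟩) ⊓ G`, whose dimension is one more. -/
theorem odd_finrank_inf_add_finrank_map_reflection_inf {F G : Submodule (ZMod 2) V}
    (hF : Q.IsTotallySingular F) (hFF : Fᗮ = F) (hG : Q.IsTotallySingular G) (hGG : Gᗮ = G)
    {v : V} (hv : Q v = 1) :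
    Odd (finrank (ZMod 2) ↥(F ⊓ G) + finrank (ZMod 2) ↥(F.map (Q.reflection v) ⊓ G)) := by
  set P := F ⊔ ZMod 2 ∙ v
  have hvF := notMem_of_isTotallySingular hF hv
  have hτF : F.map (Q.reflection v) ≤ P := by
    rintro _ ⟨y, hy, rfl⟩
    rw [reflection_apply]
    exact P.sub_mem (Submodule.mem_sup_left hy)
      (Submodule.mem_sup_right (Submodule.smul_mem _ _ (Submodule.mem_span_singleton_self v)))
  have hsup : F ⊓ G ⊔ F.map (Q.reflection v) ⊓ G = P ⊓ G := by
    refine le_antisymm (sup_le (inf_le_inf_right _ le_sup_left) (inf_le_inf_right _ hτF)) ?_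
    rintro x ⟨hxP, hxG⟩
    rcases mem_or_mem_map_reflection hF hv hxP (hG x hxG) with hx | hx
    · exact Submodule.mem_sup_left ⟨hx, hxG⟩
    · exact Submodule.mem_sup_right ⟨hx, hxG⟩
  have hinf : F ⊓ G ⊓ (F.map (Q.reflection v) ⊓ G) = Pᗮ ⊓ G := by
    rw [LinearMap.BilinForm.orthogonal_sup, hFF, ← inf_map_reflection hF hv, inf_inf_inf_comm,
      inf_idem]
  have hdim : finrank (ZMod 2) ↥(P ⊓ G) = finrank (ZMod 2) ↥(Pᗮ ⊓ G) + 1 := by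
    have hPG := LinearMap.BilinForm.finrank_inf_add_finrank_eq hQ P G
    have hFV := LinearMap.BilinForm.finrank_add_finrank_orthogonal_of_nondegenerate hQ F
    have hGV := LinearMap.BilinForm.finrank_add_finrank_orthogonal_of_nondegenerate hQ G
    have hP : finrank (ZMod 2) P = finrank (ZMod 2) F + 1 :=
      Submodule.finrank_sup_span_singleton hvF
    rw [hGG] at hPG hGV
    rw [hFF] at hFV
    omega
  rw [← Submodule.finrank_sup_add_finrank_inf_eq, hsup, hinf, hdim]
  exact ⟨_, by ring⟩

end ZMod

end QuadraticMap

lemma neg_one_pow_add_neg_one_pow_of_odd {R : Type*} [Ring R] {a b : ℕ} (h : Odd (a + b)) :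
    (-1 : R) ^ a + (-1) ^ b = 0 := by
  rcases Nat.even_or_odd a with ha | ha
  · rw [ha.neg_one_pow, (Nat.odd_add'.1 h |>.2 ha).neg_one_pow, add_neg_cancel]
  · rw [ha.neg_one_pow, (Nat.odd_add.1 h |>.1 ha).neg_one_pow, neg_add_cancel]

section Hyperbolic

variable (n : ℕ)

noncomputable def hypBilin : LinearMap.BilinForm (ZMod 2) ((Fin n ⊕ Fin n) → ZMod 2) :=
  LinearMap.mk₂ (ZMod 2) (fun x y => ∑ j, x (Sum.inl j) * y (Sum.inr j))
    (fun _ _ _ => by simp [add_mul, Finset.sum_add_distrib])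
    (fun _ _ _ => by simp [mul_assoc, Finset.mul_sum])
    (fun _ _ _ => by simp [mul_add, Finset.sum_add_distrib])
    (fun _ _ _ => by simp [Finset.mul_sum, mul_left_comm])

/-- `hypq` as a Mathlib quadratic form; `hypQ n x = hypq n x` holds by `rfl`. -/
noncomputable def hypQ : QuadraticForm (ZMod 2) ((Fin n ⊕ Fin n) → ZMod 2) :=
  (hypBilin n).toQuadraticMap

variable {n}

lemma isMaxIsotropic_iff_maximal {F : Submodule (ZMod 2) ((Fin n ⊕ Fin n) → ZMod 2)} :
    IsMaxIsotropic n F ↔ Maximal (hypQ n).IsTotallySingular F :=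
  ⟨fun h => ⟨h.1, fun U hU hFU => (h.2 U hU hFU).le⟩,
    fun h => ⟨h.1, fun _ hU hFU => le_antisymm (h.2 hU hFU) hFU⟩⟩

lemma polar_hypQ_single_inl (j : Fin n) (x : (Fin n ⊕ Fin n) → ZMod 2) :
    polar (hypQ n) (Pi.single (Sum.inl j) 1) x = x (Sum.inr j) := by
  simp [hypQ, LinearMap.BilinMap.polar_toQuadraticMap, hypBilin, Pi.single_apply]

lemma polar_hypQ_single_inr (j : Fin n) (x : (Fin n ⊕ Fin n) → ZMod 2) :
    polar (hypQ n) (Pi.single (Sum.inr j) 1) x = x (Sum.inl j) := by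
  simp [hypQ, LinearMap.BilinMap.polar_toQuadraticMap, hypBilin, Pi.single_apply]

lemma nondegenerate_polarBilin_hypQ : (polarBilin (hypQ n)).Nondegenerate := by
  refine (LinearMap.IsRefl.nondegenerate_iff_separatingLeft isRefl_polarBilin).2 fun x hx => ?_
  funext i
  cases i with
  | inl j =>
    rw [← polar_hypQ_single_inr j x, polar_comm, ← polarBilin_apply_apply, hx, Pi.zero_apply]
  | inr j =>
    rw [← polar_hypQ_single_inl j x, polar_comm, ← polarBilin_apply_apply, hx, Pi.zero_apply]

variable (n) in
noncomputable def hypLagrangian : Submodule (ZMod 2) ((Fin n ⊕ Fin n) → ZMod 2) :=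
  LinearMap.ker (LinearMap.funLeft (ZMod 2) (ZMod 2) Sum.inr)

lemma mem_hypLagrangian {x : (Fin n ⊕ Fin n) → ZMod 2} :
    x ∈ hypLagrangian n ↔ ∀ j, x (Sum.inr j) = 0 := by
  simp [hypLagrangian, funext_iff, LinearMap.funLeft_apply]

lemma isTotallySingular_hypLagrangian : (hypQ n).IsTotallySingular (hypLagrangian n) :=
  fun x hx => by
    simp [hypQ, hypBilin, LinearMap.BilinMap.toQuadraticMap_apply, mem_hypLagrangian.1 hx]

lemma orthogonal_hypLagrangian :
    LinearMap.BilinForm.orthogonal (polarBilin (hypQ n)) (hypLagrangian n) = hypLagrangian n := by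
  refine le_antisymm (fun x hx => mem_hypLagrangian.2 fun j => ?_)
    isTotallySingular_hypLagrangian.le_orthogonal
  rw [← polar_hypQ_single_inl j x, ← polarBilin_apply_apply]
  exact hx _ (mem_hypLagrangian.2 fun k => by simp)

end Hyperbolic

/-- Fix a maximal isotropic subspace `F₀` of the hyperbolic
`F₂`-space of dimension `2n` and put `ε(F) = (−1)^{dim (F ⊓ F₀)}` for maximal
isotropic `F`.  Then for every isotropic subspace `F'` which is not maximal, the
sum of `ε(F)` over all maximal isotropic subspaces `F` containing `F'` vanishes. -/
theorem sum_epsilon_over_max_isotropic_containing (n : ℕ)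
    (F₀ : Submodule (ZMod 2) ((Fin n ⊕ Fin n) → ZMod 2)) (hF₀ : IsMaxIsotropic n F₀)
    (F' : Submodule (ZMod 2) ((Fin n ⊕ Fin n) → ZMod 2))
    (hiso : IsIsotropic n F') (hnotmax : ¬ IsMaxIsotropic n F') :
    ∑ᶠ F : {F : Submodule (ZMod 2) ((Fin n ⊕ Fin n) → ZMod 2) //
              IsMaxIsotropic n F ∧ F' ≤ F},
      ((-1 : ℤ) ^ Module.finrank (ZMod 2) ((F : Submodule (ZMod 2) _) ⊓ F₀ :
          Submodule (ZMod 2) _)) = 0 := by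
  have hQ := nondegenerate_polarBilin_hypQ (n := n)
  have hLagrangian {F} (hF : IsMaxIsotropic n F) :
      LinearMap.BilinForm.orthogonal (polarBilin (hypQ n)) F = F :=
    orthogonal_eq_of_maximal hQ isTotallySingular_hypLagrangian orthogonal_hypLagrangian
      (isMaxIsotropic_iff_maximal.1 hF)
  obtain ⟨v, hvF', hv⟩ :=
    exists_mem_orthogonal_eq_one hQ hiso (mt isMaxIsotropic_iff_maximal.2 hnotmax)
  let τ (F : {F // IsMaxIsotropic n F ∧ F' ≤ F}) : {F // IsMaxIsotropic n F ∧ F' ≤ F} :=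
    ⟨F.1.map ((hypQ n).reflection v),
      isMaxIsotropic_iff_maximal.2 (maximal_map_reflection hv
        (isMaxIsotropic_iff_maximal.1 F.2.1)),
      le_map_reflection hvF' F.2.2⟩
  have hsign (F) : (-1 : ℤ) ^ finrank (ZMod 2) ↥(F.1 ⊓ F₀) +
      (-1) ^ finrank (ZMod 2) ↥((τ F).1 ⊓ F₀) = 0 :=
    neg_one_pow_add_neg_one_pow_of_odd <| odd_finrank_inf_add_finrank_map_reflection_inf hQ
      F.2.1.1 (hLagrangian F.2.1) hF₀.1 (hLagrangian hF₀) hv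
  have := Fintype.ofFinite {F // IsMaxIsotropic n F ∧ F' ≤ F}
  rw [finsum_eq_sum_of_fintype]
  refine Finset.sum_ninvolution τ hsign (fun F hF hτF => hF ?_) (fun _ => Finset.mem_univ _)
    fun F => Subtype.ext (map_map_reflection hv F.1)
  have := hsign F
  rw [hτF] at this
  linarith
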